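/- Let p and q be distinct primes, α and β positive integers, and n = p^α q^β. Then in the graph Cl₂(ℤ_n), for every unit u of ℤ_n, the degree of the vertex (1, u) equals 2 if u² = 1, and equals 3 if u² ≠ 1. -/

import Mathlib

/-- The clean graph `Cl₂(R)`: vertices are pairs `(e, u)` where `e` is a nonzero
idempotent of `R` and `u` is a unit of `R`; two distinct vertices `(e, u)` and
`(f, v)` are adjacent iff `e * f = 0` or `u * v = 1`. -/
def Cl2 (R : Type*) [CommRing R] :
    SimpleGraph ({e : R // IsIdempotentElem e ∧ e ≠ 0} × Rˣ) where
  Adj v w := v ≠ w ∧ (((v.1 : R) * (w.1 : R) = 0) ∨ ((v.2 : R) * (w.2 : R) = 1))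
  symm := by
    constructor
    rintro v w ⟨hne, h⟩
    refine ⟨hne.symm, ?_⟩
    rcases h with h | h
    · left; rwa [mul_comm]
    · right; rwa [mul_comm]
  loopless := by constructor; rintro v ⟨h, -⟩; exact h rfl

/-- The Sombor index of a graph: the sum over edges `uv` of
`√(deg(u)² + deg(v)²)`. -/
noncomputable def somborIndex {V : Type*} (G : SimpleGraph V) : ℝ :=
  ∑ᶠ e ∈ G.edgeSet,
    Sym2.lift
      ⟨fun u v =>
        Real.sqrt (((G.neighborSet u).ncard : ℝ) ^ 2 + ((G.neighborSet v).ncard : ℝ) ^ 2),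
        fun u v => by simp [add_comm]⟩ e

/-!
Every vertex `(f, v)` has `1 * f = f ≠ 0`, so `(1, u)` is adjacent exactly to the vertices
`(f, u⁻¹)` other than itself: its degree is the number of nonzero idempotents of `ℤ_n`, minus one
when `u⁻¹ = u`. By the Chinese remainder theorem `ℤ_n ≅ ℤ_{p^α} × ℤ_{q^β}`, a product of two local
rings, whose only idempotents are `0` and `1`; so `ℤ_n` has exactly three nonzero idempotents.
-/

theorem IsIdempotentElem.eq_zero_or_one_of_isLocalRing {R : Type*} [CommRing R] [IsLocalRing R]
    {e : R} (he : IsIdempotentElem e) : e = 0 ∨ e = 1 := by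
  rcases IsLocalRing.isUnit_or_isUnit_one_sub_self e with hunit | hunit
  · exact Or.inr ((IsIdempotentElem.iff_eq_one_of_isUnit hunit).mp he)
  · exact Or.inl (sub_eq_self.mp ((IsIdempotentElem.iff_eq_one_of_isUnit hunit).mp he.one_sub))

theorem ZMod.isLocalRing_prime_pow {p k : ℕ} [Fact p.Prime] (hk : k ≠ 0) :
    IsLocalRing (ZMod (p ^ k)) :=
  have : Fact (1 < p ^ k) := ⟨Nat.one_lt_pow hk (Fact.out : p.Prime).one_lt⟩
  IsLocalRing.of_surjective' (PadicInt.toZModPow k) (ZMod.ringHom_surjective _)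

theorem RingEquiv.natCard_nonzero_idempotents_eq {R S : Type*} [Ring R] [Ring S] (σ : R ≃+* S) :
    Nat.card {e : R // IsIdempotentElem e ∧ e ≠ 0} =
      Nat.card {e : S // IsIdempotentElem e ∧ e ≠ 0} :=
  Nat.card_congr <| σ.toEquiv.subtypeEquiv fun e => by
    simp [IsIdempotentElem, ← map_mul]

section LocalProduct

variable {A B : Type*} [CommRing A] [CommRing B] [IsLocalRing A] [IsLocalRing B]

theorem setOf_nonzero_idempotents_prod_of_isLocalRing :
    {x : A × B | IsIdempotentElem x ∧ x ≠ 0} = {(1, 0), (0, 1), (1, 1)} := by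
  ext ⟨a, b⟩
  simp only [Set.mem_ofPred_eq, Set.mem_insert_iff, Set.mem_singleton_iff, IsIdempotentElem,
    Prod.mk_mul_mk, Prod.mk.injEq, ne_eq, Prod.mk_eq_zero]
  constructor
  · rintro ⟨⟨ha, hb⟩, hne⟩
    rcases IsIdempotentElem.eq_zero_or_one_of_isLocalRing ha with rfl | rfl <;>
      rcases IsIdempotentElem.eq_zero_or_one_of_isLocalRing hb with rfl | rfl <;> simp_all
  · rintro (⟨rfl, rfl⟩ | ⟨rfl, rfl⟩ | ⟨rfl, rfl⟩) <;> simp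

theorem natCard_nonzero_idempotents_prod_of_isLocalRing :
    Nat.card {x : A × B // IsIdempotentElem x ∧ x ≠ 0} = 3 := by
  calc Nat.card {x : A × B // IsIdempotentElem x ∧ x ≠ 0}
      = {x : A × B | IsIdempotentElem x ∧ x ≠ 0}.ncard := Nat.card_coe_set_eq _
    _ = 3 := by
      rw [setOf_nonzero_idempotents_prod_of_isLocalRing]
      exact Set.ncard_eq_three.mpr ⟨_, _, _, by simp, by simp, by simp, rfl⟩

end LocalProduct

theorem ZMod.natCard_nonzero_idempotents_prime_pow_mul_prime_pow {p q α β : ℕ}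
    (hp : p.Prime) (hq : q.Prime) (hpq : p ≠ q) (hα : α ≠ 0) (hβ : β ≠ 0) :
    Nat.card {e : ZMod (p ^ α * q ^ β) // IsIdempotentElem e ∧ e ≠ 0} = 3 := by
  have : Fact p.Prime := ⟨hp⟩
  have : Fact q.Prime := ⟨hq⟩
  have := ZMod.isLocalRing_prime_pow (p := p) hα
  have := ZMod.isLocalRing_prime_pow (p := q) hβ
  have hcop : (p ^ α).Coprime (q ^ β) := ((Nat.coprime_primes hp hq).mpr hpq).pow α β
  rw [(ZMod.chineseRemainder hcop).natCard_nonzero_idempotents_eq,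
    natCard_nonzero_idempotents_prod_of_isLocalRing]

namespace Cl2

variable {R : Type*} [CommRing R] (h1 : IsIdempotentElem (1 : R) ∧ (1 : R) ≠ 0) (u : Rˣ)

theorem neighborSet_one :
    (Cl2 R).neighborSet (⟨1, h1⟩, u) = Set.range (fun e => (e, u⁻¹)) \ {(⟨1, h1⟩, u)} := by
  ext ⟨⟨f, hf, hf0⟩, v⟩
  simp only [SimpleGraph.mem_neighborSet, Cl2, one_mul, hf0, false_or, Set.mem_sdiff,
    Set.mem_range, Set.mem_singleton_iff, ne_eq, Prod.mk.injEq, Subtype.mk.injEq, exists_eq_left,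
    ← Units.val_mul, Units.val_eq_one, ← inv_eq_iff_mul_eq_one]
  grind

open Classical in
theorem ncard_neighborSet_one :
    ((Cl2 R).neighborSet (⟨1, h1⟩, u)).ncard =
      Nat.card {e : R // IsIdempotentElem e ∧ e ≠ 0} - if u ^ 2 = 1 then 1 else 0 := by
  let vertex : {e : R // IsIdempotentElem e ∧ e ≠ 0} → _ × Rˣ := fun e => (e, u⁻¹)
  have hinj : Function.Injective vertex := fun _ _ h => (Prod.mk.inj h).1
  have hmem : (⟨1, h1⟩, u) ∈ Set.range vertex ↔ u ^ 2 = 1 := by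
    simp [vertex, inv_eq_iff_mul_eq_one, sq]
  rw [neighborSet_one]
  split_ifs with hu
  · rw [Set.ncard_sdiff_singleton_of_mem (hmem.mpr hu), Set.ncard_range_of_injective hinj]
  · rw [Set.sdiff_singleton_eq_self (mt hmem.mp hu), Set.ncard_range_of_injective hinj,
      Nat.sub_zero]

end Cl2

theorem cl2_two_prime_powers_degree_one (p q : ℕ) (hp : p.Prime) (hq : q.Prime)
    (hpq : p ≠ q) (α β : ℕ) (hα : 0 < α) (hβ : 0 < β) (n : ℕ) (hn : n = p ^ α * q ^ β)
    (u : (ZMod n)ˣ) (h1 : IsIdempotentElem (1 : ZMod n) ∧ (1 : ZMod n) ≠ 0) :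
    (u ^ 2 = 1 → ((Cl2 (ZMod n)).neighborSet (⟨1, h1⟩, u)).ncard = 2) ∧
    (u ^ 2 ≠ 1 → ((Cl2 (ZMod n)).neighborSet (⟨1, h1⟩, u)).ncard = 3) := by
  subst hn
  rw [Cl2.ncard_neighborSet_one,
    ZMod.natCard_nonzero_idempotents_prime_pow_mul_prime_pow hp hq hpq hα.ne' hβ.ne']
  exact ⟨fun hu => by simp [hu], fun hu => by simp [hu]⟩
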